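/- Let G be a simple graph, let x ∈ V(G), and let S ⊆ V(G) \ {x} be such that G has a k-fan between x and S. Then any (k−1)-fan between x and S can be extended to a k-fan between x and S in such a way that the end vertices of the (k−1)-fan are among the end vertices of the k-fan. -/

import Mathlib

/-!
Start from any `k`-fan `P` and the `(k-1)`-fan `Q`. If the end of some path `Q j` is not an end
of `P`, let `y` be the last vertex of `Q j` on `P`, say on `P i`, and reroute `P i` along `Q j`
from `y` on; when `y = x`, pick `P i` with an end that is not an end of `Q`, which exists as `P`
has more paths. This yields a `k`-fan again. Charge each path of `P` one unit if its end is not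
an end of `Q`, plus one unit per edge outside `Q`. Every rerouting lowers the total charge: for
`y = x` the rerouted path loses its unit for the end, and otherwise the discarded part of `P i`
from `y` uses an edge outside `Q`, since inside `Q` it would stay on `Q j` and end at its end.
-/

open SimpleGraph

/-- A `k`-fan between `x` and `S` with end vertices `e 0, …, e (k-1)`: `k` paths joining
`x` to the `k` distinct vertices `e i` of `S`, pairwise disjoint except at `x`, each
meeting `S` in exactly one vertex (its end). -/
def HasFanOn {V : Type*} (G : SimpleGraph V) (x : V) (S : Set V) {k : ℕ}
    (e : Fin k → V) : Prop :=
  Function.Injective e ∧ (∀ i, e i ∈ S) ∧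
  ∃ P : ∀ i : Fin k, G.Walk x (e i),
    (∀ i, (P i).IsPath) ∧
    (∀ i, ∀ y ∈ (P i).support, y ∈ S → y = e i) ∧
    (∀ i j, i ≠ j → ∀ y, y ∈ (P i).support → y ∈ (P j).support → y = x)

/-- `G` has a `k`-fan between `x` and `S`. -/
def HasFan {V : Type*} (G : SimpleGraph V) (x : V) (S : Set V) (k : ℕ) : Prop :=
  ∃ e : Fin k → V, HasFanOn G x S e

theorem Fintype.exists_notMem_range_of_card_lt {α β γ : Type*} [Fintype α] [Fintype β]
    {f : α → γ} (hf : f.Injective) (g : β → γ) (h : Fintype.card β < Fintype.card α) :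
    ∃ a, f a ∉ Set.range g := by
  by_contra! hfg
  choose c hc using hfg
  exact (Fintype.card_le_of_injective c fun a a' h => hf (by rw [← hc a, ← hc a', h])).not_gt h

theorem Finset.sum_comp_update_lt {ι α M : Type*} [Fintype ι] [DecidableEq ι] [AddCommMonoid M]
    [PartialOrder M] [IsOrderedCancelAddMonoid M] (f : α → M) (p : ι → α) {i : ι} {a : α}
    (h : f a < f (p i)) : ∑ j, f (Function.update p i a j) < ∑ j, f (p j) := by
  refine Finset.sum_lt_sum (fun j _ => ?_) ⟨i, Finset.mem_univ i, by simpa using h⟩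
  rcases eq_or_ne j i with rfl | hj
  · simpa using h.le
  · simp [hj]

namespace SimpleGraph.Walk

variable {V : Type*} {G : SimpleGraph V}

theorem exists_eq_append_of_last_mem (T : Set V) {u v : V} (W : G.Walk u v)
    (h : ∃ z ∈ W.support, z ∈ T) :
    ∃ (y : V) (L : G.Walk u y) (R : G.Walk y v),
      W = L.append R ∧ y ∈ T ∧ ∀ z ∈ R.support, z ∈ T → z = y := by
  induction W with
  | nil =>
    obtain ⟨z, hz, hzT⟩ := h
    rw [support_nil, List.mem_singleton] at hz
    subst hz
    exact ⟨z, nil, nil, rfl, hzT, by simp⟩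
  | @cons a b c hab W ih =>
    by_cases htail : ∃ z ∈ W.support, z ∈ T
    · obtain ⟨y, L, R, rfl, hyT, hR⟩ := ih htail
      exact ⟨y, cons hab L, R, (cons_append ..).symm, hyT, hR⟩
    · have haT : a ∈ T := by
        obtain ⟨z, hz, hzT⟩ := h
        rcases List.mem_cons.1 hz with rfl | hz
        · exact hzT
        · exact absurd ⟨z, hz, hzT⟩ htail
      refine ⟨a, nil, cons hab W, rfl, haT, fun z hz hzT => ?_⟩
      rcases List.mem_cons.1 hz with rfl | hz
      · rfl
      · exact absurd ⟨z, hz, hzT⟩ htail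

theorem IsPath.append {u v w : V} {p : G.Walk u v} {q : G.Walk v w} (hp : p.IsPath)
    (hq : q.IsPath) (hpq : ∀ z ∈ p.support, z ∈ q.support → z = v) :
    (p.append q).IsPath := by
  rw [isPath_def, support_append, List.nodup_append]
  have hq' := hq.support_nodup
  rw [← cons_tail_support, List.nodup_cons] at hq'
  refine ⟨hp.support_nodup, hq'.2, fun z hzp z' hzq hzz => ?_⟩
  subst hzz
  exact hq'.1 (hpq z hzp (List.mem_of_mem_tail hzq) ▸ hzq)

end SimpleGraph.Walk

namespace SimpleGraph

variable {V : Type*} {G : SimpleGraph V} {x : V} {S : Set V} {k m : ℕ}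

/-- A fan between `x` and `S` whose paths are bundled with their ends, so that a single path
can be swapped by `Function.update`. -/
structure IsFan (x : V) (S : Set V) (p : Fin k → Σ v, G.Walk x v) : Prop where
  injective_fst : Function.Injective (Sigma.fst ∘ p)
  fst_mem : ∀ i, (p i).1 ∈ S
  isPath : ∀ i, (p i).2.IsPath
  eq_fst_of_mem : ∀ i, ∀ z ∈ (p i).2.support, z ∈ S → z = (p i).1
  eq_of_mem_support : ∀ i j, i ≠ j → ∀ z ∈ (p i).2.support, z ∈ (p j).2.support → z = x

theorem hasFanOn_iff {e : Fin k → V} :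
    HasFanOn G x S e ↔ ∃ p : Fin k → Σ v, G.Walk x v, IsFan x S p ∧ Sigma.fst ∘ p = e := by
  constructor
  · rintro ⟨he, heS, P, hP, hPS, hPdisj⟩
    exact ⟨fun i => ⟨e i, P i⟩, ⟨he, heS, hP, hPS, hPdisj⟩, rfl⟩
  · rintro ⟨p, ⟨hinj, hS, hP, hPS, hPdisj⟩, rfl⟩
    exact ⟨hinj, hS, fun i => (p i).2, hP, hPS, hPdisj⟩

def fanEdges (p : Fin m → Σ v, G.Walk x v) : Set (Sym2 V) :=
  {e | ∃ j, e ∈ (p j).2.edges}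

open Classical in
noncomputable def fanCost (p₀ : Fin m → Σ v, G.Walk x v) (q : Σ v, G.Walk x v) : ℕ :=
  (if q.1 ∈ Set.range (Sigma.fst ∘ p₀) then 0 else 1) + q.2.edges.countP (· ∉ fanEdges p₀)

theorem fanCost_append_lt (p₀ : Fin m → Σ v, G.Walk x v) {y v w : V} (q : G.Walk x y)
    {r : G.Walk y w} {R : G.Walk y v} (hv : v ∈ Set.range (Sigma.fst ∘ p₀))
    (hR : ∀ e ∈ R.edges, e ∈ fanEdges p₀)
    (h : w ∉ Set.range (Sigma.fst ∘ p₀) ∨ ∃ e ∈ r.edges, e ∉ fanEdges p₀) :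
    fanCost p₀ ⟨v, q.append R⟩ < fanCost p₀ ⟨w, q.append r⟩ := by
  classical
  have hR₀ : R.edges.countP (· ∉ fanEdges p₀) = 0 := List.countP_eq_zero.2 (by simpa using hR)
  have hr : 0 < (if w ∈ Set.range (Sigma.fst ∘ p₀) then 0 else 1) +
      r.edges.countP (· ∉ fanEdges p₀) := by
    rcases h with hw | ⟨e, he, he₀⟩
    · simp [hw]
    · have := List.countP_pos_iff (p := (· ∉ fanEdges p₀)).2 ⟨e, he, decide_eq_true he₀⟩
      omega
  simp only [fanCost, Walk.edges_append, List.countP_append, if_pos hv, hR₀]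
  omega

namespace IsFan

variable {p₀ : Fin m → Σ v, G.Walk x v} {p : Fin k → Σ v, G.Walk x v}

open Function in
theorem update (hp : IsFan x S p) (i : Fin k) {v : V} (W : G.Walk x v) (hv : v ∈ S)
    (hvp : v ∉ Set.range (Sigma.fst ∘ p)) (hW : W.IsPath)
    (hWS : ∀ z ∈ W.support, z ∈ S → z = v)
    (hWp : ∀ j ≠ i, ∀ z ∈ W.support, z ∈ (p j).2.support → z = x) :
    IsFan x S (Function.update p i ⟨v, W⟩) where
  injective_fst := by
    rw [comp_update]
    intro j j' h
    simp only [update_apply] at h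
    split_ifs at h with hj hj'
    · rw [hj, hj']
    · exact absurd ⟨j', h.symm⟩ hvp
    · exact absurd ⟨j, h⟩ hvp
    · exact hp.injective_fst h
  fst_mem := (forall_update_iff p fun _ q => q.1 ∈ S).2 ⟨hv, fun j _ => hp.fst_mem j⟩
  isPath := (forall_update_iff p fun _ q => q.2.IsPath).2 ⟨hW, fun j _ => hp.isPath j⟩
  eq_fst_of_mem := (forall_update_iff p fun _ q => ∀ z ∈ q.2.support, z ∈ S → z = q.1).2
    ⟨hWS, fun j _ => hp.eq_fst_of_mem j⟩
  eq_of_mem_support j j' hjj' z hz hz' := by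
    have support_update : ∀ j, (Function.update p i ⟨v, W⟩ j).2.support =
        if j = i then W.support else (p j).2.support := fun j => by
      split_ifs with h
      · subst h; rw [update_self]
      · rw [update_of_ne h]
    rw [support_update] at hz hz'
    split_ifs at hz hz' with hj hj'
    · exact absurd (hj.trans hj'.symm) hjj'
    · exact hWp j' hj' z hz hz'
    · exact hWp j hj z hz' hz
    · exact hp.eq_of_mem_support j j' hjj' z hz hz'

theorem mem_support_of_edges_subset (h₀ : IsFan x S p₀) {j : Fin m} {u w : V}
    (r : G.Walk u w) (hx : x ∉ r.support) (hr : ∀ e ∈ r.edges, e ∈ fanEdges p₀)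
    (hu : u ∈ (p₀ j).2.support) : w ∈ (p₀ j).2.support := by
  induction r with
  | nil => exact hu
  | @cons a b c hab r ih =>
    obtain ⟨j', hj'⟩ := hr s(a, b) (by simp)
    obtain rfl : j' = j := by
      by_contra hne
      have hax : a = x := h₀.eq_of_mem_support j' j hne a
        ((p₀ j').2.fst_mem_support_of_mem_edges hj') hu
      exact hx (hax ▸ Walk.start_mem_support _)
    exact ih (fun h => hx (by simp [h])) (fun e he => hr e (by simp [he]))
      ((p₀ j').2.snd_mem_support_of_mem_edges hj')

theorem reroute (hp : IsFan x S p) {i : Fin k} {y v : V} {q : G.Walk x y}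
    {r : G.Walk y (p i).1} (hqr : (p i).2 = q.append r) (hyS : y ∉ S) {R : G.Walk y v}
    (hR : R.IsPath) (hv : v ∈ S) (hvp : v ∉ Set.range (Sigma.fst ∘ p))
    (hRS : ∀ z ∈ R.support, z ∈ S → z = v)
    (hRp : ∀ j, ∀ z ∈ R.support, z ∈ (p j).2.support → z = y) :
    IsFan x S (Function.update p i ⟨v, q.append R⟩) := by
  have hqr_path : (q.append r).IsPath := hqr ▸ hp.isPath i
  have hq_sub : ∀ z ∈ q.support, z ∈ (p i).2.support := fun z hz => by
    rw [hqr, Walk.mem_support_append_iff]; exact Or.inl hz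
  have hy : y ∈ (p i).2.support := hq_sub y q.end_mem_support
  refine hp.update i _ hv hvp ?_ ?_ ?_
  · exact hqr_path.of_append_left.append hR fun z hzq hzR => hRp i z hzR (hq_sub z hzq)
  · intro z hz hzS
    rcases (Walk.mem_support_append_iff _ _).1 hz with hzq | hzR
    · -- the end of `p i` lies in `S`, hence differs from `y`, hence is not on `q`
      have hend : (p i).1 ≠ y := fun h => hyS (h ▸ hp.fst_mem i)
      exact absurd (hp.eq_fst_of_mem i z (hq_sub z hzq) hzS)
        (hqr_path.ne_of_mem_support_of_append hend hzq r.end_mem_support)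
    · exact hRS z hzR hzS
  · intro j hj z hz hzj
    rcases (Walk.mem_support_append_iff _ _).1 hz with hzq | hzR
    · exact hp.eq_of_mem_support i j hj.symm z (hq_sub z hzq) hzj
    · obtain rfl := hRp j z hzR hzj
      exact hp.eq_of_mem_support i j hj.symm z hy hzj

open Walk in
theorem exists_sum_fanCost_lt (h₀ : IsFan x S p₀) (hp : IsFan x S p) (hmk : m < k)
    (hsub : ¬Set.range (Sigma.fst ∘ p₀) ⊆ Set.range (Sigma.fst ∘ p)) :
    ∃ p' : Fin k → Σ v, G.Walk x v,
      IsFan x S p' ∧ ∑ i, fanCost p₀ (p' i) < ∑ i, fanCost p₀ (p i) := by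
  obtain ⟨_, ⟨j₀, rfl⟩, hj₀⟩ := Set.not_subset.1 hsub
  -- `y` is the last vertex of the `j₀`-th path of `p₀` that lies on `p`
  obtain ⟨y, L, R, hLR, ⟨i₁, hyi₁⟩, hRp⟩ := (p₀ j₀).2.exists_eq_append_of_last_mem
    {z | ∃ i, z ∈ (p i).2.support} ⟨x, start_mem_support _, ⟨0, by omega⟩, start_mem_support _⟩
  have hR_sub : ∀ z ∈ R.support, z ∈ (p₀ j₀).2.support := fun z hz => by
    rw [hLR, mem_support_append_iff]; exact Or.inr hz
  have hRS : ∀ z ∈ R.support, z ∈ S → z = (p₀ j₀).1 :=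
    fun z hz => h₀.eq_fst_of_mem j₀ z (hR_sub z hz)
  have hyS : y ∉ S := fun hyS => hj₀ ⟨i₁,
    (hp.eq_fst_of_mem i₁ y hyi₁ hyS).symm.trans (hRS y R.start_mem_support hyS)⟩
  obtain ⟨i, hyi, hxi⟩ :
      ∃ i, y ∈ (p i).2.support ∧ (y = x → (p i).1 ∉ Set.range (Sigma.fst ∘ p₀)) := by
    by_cases hyx : y = x
    · obtain ⟨i, hi⟩ := Fintype.exists_notMem_range_of_card_lt hp.injective_fst (Sigma.fst ∘ p₀)
        (by simpa using hmk)
      subst hyx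
      exact ⟨i, start_mem_support _, fun _ => hi⟩
    · exact ⟨i₁, hyi₁, fun h => absurd h hyx⟩
  obtain ⟨q, r, hqr⟩ := mem_support_iff_exists_append.1 hyi
  refine ⟨_, hp.reroute hqr hyS (hLR ▸ h₀.isPath j₀).of_append_right (h₀.fst_mem j₀) hj₀ hRS
    (fun j z hz hzj => hRp z hz ⟨j, hzj⟩), Finset.sum_comp_update_lt _ _ ?_⟩
  show fanCost p₀ ⟨_, q.append R⟩ < fanCost p₀ ⟨(p i).1, (p i).2⟩
  rw [hqr]
  refine fanCost_append_lt p₀ q ⟨j₀, rfl⟩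
    (fun e he => ⟨j₀, by rw [hLR, edges_append]; exact List.mem_append_right _ he⟩) ?_
  by_cases hyx : y = x
  · exact Or.inl (hxi hyx)
  · -- otherwise `r` cannot run inside `p₀`: it would stay on the `j₀`-th path and end at its end
    refine Or.inr (by_contra fun hr => hj₀ ⟨i, ?_⟩)
    push Not at hr
    have hxr : x ∉ r.support := fun hx =>
      (hqr ▸ hp.isPath i).ne_of_mem_support_of_append (Ne.symm hyx) q.start_mem_support hx rfl
    exact (h₀.eq_fst_of_mem j₀ _ (h₀.mem_support_of_edges_subset r hxr hr
      (hR_sub y R.start_mem_support)) (hp.fst_mem i))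

theorem exists_isFan_range_subset (h₀ : IsFan x S p₀) (hmk : m < k)
    {p : Fin k → Σ v, G.Walk x v} (hp : IsFan x S p) :
    ∃ p' : Fin k → Σ v, G.Walk x v,
      IsFan x S p' ∧ Set.range (Sigma.fst ∘ p₀) ⊆ Set.range (Sigma.fst ∘ p') := by
  by_cases hsub : Set.range (Sigma.fst ∘ p₀) ⊆ Set.range (Sigma.fst ∘ p)
  · exact ⟨p, hp, hsub⟩
  obtain ⟨p', hp', hlt⟩ := h₀.exists_sum_fanCost_lt hp hmk hsub
  exact h₀.exists_isFan_range_subset hmk hp'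
termination_by ∑ i, fanCost p₀ (p i)

end IsFan

end SimpleGraph

theorem perfect_fan_extension_general {V : Type*} (G : SimpleGraph V) (x : V) (S : Set V)
    (k : ℕ) (hk : 1 ≤ k) (hfan : HasFan G x S k)
    (e : Fin (k - 1) → V) (he : HasFanOn G x S e) :
    ∃ e' : Fin k → V, HasFanOn G x S e' ∧ Set.range e ⊆ Set.range e' := by
  obtain ⟨_, hf⟩ := hfan
  obtain ⟨p, hp, -⟩ := hasFanOn_iff.1 hf
  obtain ⟨p₀, hp₀, rfl⟩ := hasFanOn_iff.1 he
  obtain ⟨p', hp', hsub⟩ := hp₀.exists_isFan_range_subset (by omega : k - 1 < k) hp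
  exact ⟨_, hasFanOn_iff.2 ⟨p', hp', rfl⟩, hsub⟩

/-- Perfect's theorem: if `G` has a `k`-fan between `x` and `S ⊆ V(G) \ {x}`, then any
`(k-1)`-fan between `x` and `S` extends to a `k`-fan between `x` and `S` whose set of
end vertices contains the end vertices of the `(k-1)`-fan. -/
theorem perfect_fan_extension {V : Type*} (G : SimpleGraph V) (x : V) (S : Set V)
    (hxS : x ∉ S) (k : ℕ) (hk : 1 ≤ k) (hfan : HasFan G x S k)
    (e : Fin (k - 1) → V) (he : HasFanOn G x S e) :
    ∃ e' : Fin k → V, HasFanOn G x S e' ∧ Set.range e ⊆ Set.range e' :=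
  perfect_fan_extension_general G x S k hk hfan e he
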